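/- Consider a deep linear network with weight entries sampled i.i.d. from a symmetric distribution, and two fixed inputs x_u, x_v ∈ ℝ^{n_0}. Let g^u be the gradient of the network output at input x_u with respect to the weights, and let Ĥ^v be the Hessian of the network output at input x_v with respect to the weights. Then E[(g^u)ᵀ Ĥ^v g^u] = 0. -/

import Mathlib

open MeasureTheory ProbabilityTheory

namespace DLN

/-- Parameters (weights) of an `L`-layer linear network with widths `n 0, n 1, …, n L`.
`W k j i` is the weight `w_{i j}^{k+1}` of the paper: the entry in row `j ∈ Fin (n k)`
and column `i ∈ Fin (n (k+1))` of the matrix `W^{k+1} ∈ ℝ^{n k × n (k+1)}`. -/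
abbrev Params (n : ℕ → ℕ) (L : ℕ) := (k : Fin L) → Fin (n k.1) → Fin (n (k.1 + 1)) → ℝ

/-- Weights for every layer index `k : ℕ` (used for the recursive definitions). -/
abbrev WTot (n : ℕ → ℕ) := (k : ℕ) → Fin (n k) → Fin (n (k + 1)) → ℝ

/-- Extend finitely many weight matrices by zero. -/
def ext (n : ℕ → ℕ) (L : ℕ) (W : Params n L) : WTot n :=
  fun k => if h : k < L then W ⟨k, h⟩ else 0

/-- Activations: `act n x Wt l = y^l`, with `y^0 = x` and `y^{l+1} = W^{(l+1)⊤} y^l`. -/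
def act (n : ℕ → ℕ) (x : Fin (n 0) → ℝ) (Wt : WTot n) : (l : ℕ) → Fin (n l) → ℝ
  | 0 => x
  | l + 1 => fun i => ∑ j, Wt l j i * act n x Wt l j

/-- `chain n Wt l m` is the matrix product `W^{l+1} W^{l+2} ⋯ W^{l+m} ∈ ℝ^{n l × n (l+m)}`. -/
def chain (n : ℕ → ℕ) (Wt : WTot n) (l : ℕ) : (m : ℕ) → Fin (n l) → Fin (n (l + m)) → ℝ
  | 0 => fun u j => if (u : ℕ) = (j : ℕ) then 1 else 0
  | m + 1 => fun u j => ∑ i : Fin (n (l + m)), chain n Wt l m u i * Wt (l + m) i j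

/-- `A n Wt l k u j = a_{l u}^{k j} = ∂ y_j^k / ∂ y_u^l`, the `(u,j)` entry of
`W^{l+1} ⋯ W^{k}` (and `0` for `k < l`). -/
def A (n : ℕ → ℕ) (Wt : WTot n) (l k : ℕ) (u : Fin (n l)) (j : Fin (n k)) : ℝ :=
  if h : l ≤ k then
    chain n Wt l (k - l) u (Fin.cast (congrArg n (Nat.add_sub_cancel' h).symm) j) else 0

/-- The scalar output `y^L` of the network (`n L` is assumed positive, the paper has `n L = 1`). -/
def F (n : ℕ → ℕ) (L : ℕ) (hL : 0 < n L) (x : Fin (n 0) → ℝ) (W : Params n L) : ℝ :=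
  act n x (ext n L W) L ⟨0, hL⟩

/-- The canonical basis direction corresponding to the single weight `w_{i j}^{k+1}`. -/
def basis (n : ℕ → ℕ) (L : ℕ) (k : Fin L) (j : Fin (n k.1)) (i : Fin (n (k.1 + 1))) :
    Params n L :=
  Pi.single k (Pi.single j (Pi.single i (1 : ℝ)))

/-- The gradient of `f` w.r.t. the concatenated weight vector, as an element of `Params n L`:
its `(k,j,i)` entry is the partial derivative `∂ f / ∂ w_{i j}^{k+1}`. -/
noncomputable def grad (n : ℕ → ℕ) (L : ℕ) (f : Params n L → ℝ) (W : Params n L) :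
    Params n L :=
  fun k j i => fderiv ℝ f W (basis n L k j i)

/-- The Hessian bilinear form of `f` at `W` evaluated at directions `u, v`,
i.e. `uᵀ (∇² f) v`. -/
noncomputable def hess (n : ℕ → ℕ) (L : ℕ) (f : Params n L → ℝ) (W u v : Params n L) : ℝ :=
  fderiv ℝ (fun W' => fderiv ℝ f W' v) W u

/-- Euclidean dot product on the concatenated weight space. -/
def dot (n : ℕ → ℕ) (L : ℕ) (u v : Params n L) : ℝ :=
  ∑ k : Fin L, ∑ j : Fin (n k.1), ∑ i : Fin (n (k.1 + 1)), u k j i * v k j i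

/-- Squared Euclidean norm on the concatenated weight space. -/
def sqnorm (n : ℕ → ℕ) (L : ℕ) (u : Params n L) : ℝ := dot n L u u

/-- The Hessian–gradient quadratic form `gᵀ Ĥ g` of the network output. -/
noncomputable def gHg (n : ℕ → ℕ) (L : ℕ) (hL : 0 < n L) (x : Fin (n 0) → ℝ)
    (W : Params n L) : ℝ :=
  hess n L (F n L hL x) W (grad n L (F n L hL x) W) (grad n L (F n L hL x) W)

/-- Index type enumerating all individual weights. -/
abbrev Idx (n : ℕ → ℕ) (L : ℕ) := Σ k : Fin L, Fin (n k.1) × Fin (n (k.1 + 1))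

/-- The individual weight entry corresponding to an index. -/
def entry (n : ℕ → ℕ) (L : ℕ) (W : Params n L) (p : Idx n L) : ℝ := W p.1 p.2.1 p.2.2

end DLN

/-!
Flipping the sign of every first-layer weight is a linear involution `σ` of the weight space
that negates the output, `F (σ W) = -F W`. Differentiating, `∇F (σ W) = -σ (∇F W)` and
`∇²F (σ W) (σ u) (σ v) = -∇²F W u v`, so `gᵀ Ĥ g`, a cubic expression in derivatives of odd
functions, is itself odd under `σ`. Since the weights are i.i.d. and symmetric, `σ` preserves
their joint law, and the expectation of an odd function of them vanishes.
-/

section OddIntegral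

variable {ι α G : Type*} [MeasurableSpace α] [NormedAddCommGroup G] [NormedSpace ℝ G]

theorem MeasureTheory.MeasurePreserving.integral_eq_zero_of_comp_eq_neg {m : Measure α}
    {τ : α → α} (hτ : MeasurePreserving τ m m) {f : α → G}
    (hf : AEStronglyMeasurable f m) (hodd : ∀ x, f (τ x) = -f x) : ∫ x, f x ∂m = 0 := by
  have hcomp : ∫ x, f x ∂m = ∫ x, f (τ x) ∂m := by
    conv_lhs => rw [← hτ.map_eq]
    exact integral_map hτ.measurable.aemeasurable (by rwa [hτ.map_eq])
  simp only [hodd, integral_neg] at hcomp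
  rw [eq_neg_iff_add_eq_zero, ← two_smul ℝ] at hcomp
  exact (smul_eq_zero.mp hcomp).resolve_left two_ne_zero

theorem measurePreserving_pi_mul_sign [Fintype ι] {ν : Measure ℝ} [SigmaFinite ν]
    (hsym : ν.map (fun t => -t) = ν) (c : ι → ℝ) (hc : ∀ i, c i = 1 ∨ c i = -1) :
    MeasurePreserving (fun y i => c i * y i) (Measure.pi fun _ => ν) (Measure.pi fun _ => ν) := by
  refine measurePreserving_pi _ _ fun i => ?_
  show MeasurePreserving (fun t => c i * t) ν ν
  rcases hc i with h | h <;> simp only [h, one_mul, neg_one_mul]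
  · exact .id ν
  · exact ⟨measurable_neg, hsym⟩

end OddIntegral

section OddDerivatives

variable {E : Type*} [NormedAddCommGroup E] [NormedSpace ℝ E] {f g : E → ℝ}

theorem fderiv_map_apply_map_of_comp_eq_neg (σ : E →L[ℝ] E) {x : E}
    (hf : DifferentiableAt ℝ f (σ x)) (h : ∀ y, f (σ y) = -g y) (u : E) :
    fderiv ℝ f (σ x) (σ u) = -fderiv ℝ g x u := by
  have hchain : fderiv ℝ (f ∘ σ) x = (fderiv ℝ f (σ x)).comp σ := by
    rw [fderiv_comp x hf σ.differentiableAt, σ.fderiv]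
  rw [show f ∘ σ = fun y => -g y from funext h, fderiv_fun_neg] at hchain
  exact (DFunLike.congr_fun hchain u).symm

end OddDerivatives

namespace DLN

variable {n : ℕ → ℕ} {L : ℕ}

section Smoothness

variable {N : WithTop ℕ∞}

theorem contDiff_ext_apply (l : ℕ) (j : Fin (n l)) (i : Fin (n (l + 1))) :
    ContDiff ℝ N fun V : Params n L => ext n L V l j i := by
  unfold ext
  split_ifs with h
  · exact contDiff_pi.mp (contDiff_pi.mp (contDiff_pi.mp contDiff_id (⟨l, h⟩ : Fin L)) j) i
  · exact contDiff_const

theorem contDiff_act (x : Fin (n 0) → ℝ) :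
    ∀ (l : ℕ) (j : Fin (n l)), ContDiff ℝ N fun V : Params n L => act n x (ext n L V) l j
  | 0, _ => contDiff_const
  | l + 1, i => ContDiff.sum fun j _ => (contDiff_ext_apply l j i).mul (contDiff_act x l j)

theorem contDiff_F (hL : 0 < n L) (x : Fin (n 0) → ℝ) : ContDiff ℝ N (F n L hL x) :=
  contDiff_act x L ⟨0, hL⟩

end Smoothness

theorem hess_const (c : ℝ) (V u v : Params n L) : hess n L (fun _ => c) V u v = 0 := by
  simp [hess]

theorem hess_neg_neg (f : Params n L → ℝ) (V u v : Params n L) :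
    hess n L f V (-u) (-v) = hess n L f V u v := by
  simp only [hess, map_neg, fderiv_fun_neg, neg_apply, neg_neg]

theorem continuous_hess_grad {f g : Params n L → ℝ} (hf : ContDiff ℝ 2 f)
    (hg : ContDiff ℝ 1 g) :
    Continuous fun V => hess n L f V (grad n L g V) (grad n L g V) := by
  have hgrad : Continuous (grad n L g) :=
    continuous_pi fun k => continuous_pi fun j => continuous_pi fun i =>
      (hg.continuous_fderiv one_ne_zero).clm_apply continuous_const
  have hf' : ContDiff ℝ 1 (fderiv ℝ f) := hf.fderiv_right (by norm_num)
  have hhess : ∀ V u v, hess n L f V u v = fderiv ℝ (fderiv ℝ f) V u v := fun V u v => by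
    have := fderiv_clm_apply (hf'.differentiable one_ne_zero V) (differentiableAt_const v)
    simp [hess, this]
  simp only [hhess]
  exact ((hf'.continuous_fderiv one_ne_zero).clm_apply hgrad).clm_apply hgrad

theorem hess_map_of_comp_eq_neg (σ : Params n L →L[ℝ] Params n L) {f : Params n L → ℝ}
    (hf : ContDiff ℝ 2 f) (h : ∀ V, f (σ V) = -f V) (V u v : Params n L) :
    hess n L f (σ V) (σ u) (σ v) = -hess n L f V u v := by
  have hdiff : Differentiable ℝ fun W => fderiv ℝ f W (σ v) :=
    ((hf.fderiv_right (m := 1) (by norm_num)).clm_apply contDiff_const).differentiable one_ne_zero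
  exact fderiv_map_apply_map_of_comp_eq_neg σ (hdiff _)
    (fun W => fderiv_map_apply_map_of_comp_eq_neg σ (hf.differentiable (by norm_num) _) h v) u

section FlipFirstLayer

def layerSign (k : Fin L) : ℝ := if (k : ℕ) = 0 then -1 else 1

theorem layerSign_eq_one_or_neg_one (k : Fin L) : layerSign k = 1 ∨ layerSign k = -1 := by
  unfold layerSign; split_ifs <;> simp

theorem layerSign_mul_self (k : Fin L) : layerSign k * layerSign k = 1 := by
  rcases layerSign_eq_one_or_neg_one k with h | h <;> simp [h]

noncomputable def flipFirstLayer (n : ℕ → ℕ) (L : ℕ) : Params n L →L[ℝ] Params n L :=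
  ContinuousLinearMap.pi fun k => layerSign k • ContinuousLinearMap.proj k

theorem flipFirstLayer_apply (V : Params n L) (k : Fin L) (j : Fin (n k.1))
    (i : Fin (n (k.1 + 1))) : flipFirstLayer n L V k j i = layerSign k * V k j i := rfl

theorem flipFirstLayer_basis (k : Fin L) (j : Fin (n k.1)) (i : Fin (n (k.1 + 1))) :
    flipFirstLayer n L (basis n L k j i) = layerSign k • basis n L k j i := by
  funext k' j' i'
  rw [flipFirstLayer_apply]
  by_cases h : k' = k
  · subst h; rfl
  · simp [basis, Pi.single_eq_of_ne h]

theorem act_flipFirstLayer (hL : 0 < L) (x : Fin (n 0) → ℝ) (V : Params n L) :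
    ∀ l, l ≠ 0 → ∀ j : Fin (n l),
      act n x (ext n L (flipFirstLayer n L V)) l j = -act n x (ext n L V) l j
  | 0, h0, _ => absurd rfl h0
  | l + 1, _, i => by
    simp only [act, ← Finset.sum_neg_distrib]
    refine Finset.sum_congr rfl fun j _ => ?_
    rcases Nat.eq_zero_or_pos l with rfl | hl
    · simp [act, ext, hL, flipFirstLayer_apply, layerSign]
    · have hext : ext n L (flipFirstLayer n L V) l = ext n L V l := by
        unfold ext
        split_ifs
        · funext j i; simp [flipFirstLayer_apply, layerSign, hl.ne']
        · rfl
      rw [hext, act_flipFirstLayer hL x V l hl.ne' j, mul_neg]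

theorem F_flipFirstLayer (hL : 0 < L) (hnL : 0 < n L) (x : Fin (n 0) → ℝ) (V : Params n L) :
    F n L hnL x (flipFirstLayer n L V) = -F n L hnL x V :=
  act_flipFirstLayer hL x V L hL.ne' ⟨0, hnL⟩

variable {f g : Params n L → ℝ}

theorem grad_flipFirstLayer (hf : Differentiable ℝ f) (h : ∀ V, f (flipFirstLayer n L V) = -f V)
    (V : Params n L) : grad n L f (flipFirstLayer n L V) = -flipFirstLayer n L (grad n L f V) := by
  funext k j i
  have hbasis := fderiv_map_apply_map_of_comp_eq_neg _ (hf _) h (basis n L k j i) (x := V)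
  rw [flipFirstLayer_basis, map_smul, smul_eq_mul] at hbasis
  calc grad n L f (flipFirstLayer n L V) k j i
      = layerSign k * (layerSign k * grad n L f (flipFirstLayer n L V) k j i) := by
        rw [← mul_assoc, layerSign_mul_self, one_mul]
    _ = -(layerSign k * grad n L f V k j i) := by
        rw [grad, grad, hbasis, mul_neg]
    _ = (-flipFirstLayer n L (grad n L f V)) k j i := rfl

theorem hess_grad_flipFirstLayer (hf : ContDiff ℝ 2 f) (hg : Differentiable ℝ g)
    (hfodd : ∀ V, f (flipFirstLayer n L V) = -f V)
    (hgodd : ∀ V, g (flipFirstLayer n L V) = -g V) (V : Params n L) :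
    hess n L f (flipFirstLayer n L V) (grad n L g (flipFirstLayer n L V))
        (grad n L g (flipFirstLayer n L V)) =
      -hess n L f V (grad n L g V) (grad n L g V) := by
  rw [grad_flipFirstLayer hg hgodd, hess_neg_neg, hess_map_of_comp_eq_neg _ hf hfodd]

end FlipFirstLayer

def ofIdx (y : Idx n L → ℝ) : Params n L := fun k j i => y ⟨k, (j, i)⟩

theorem continuous_ofIdx : Continuous (ofIdx (n := n) (L := L)) :=
  continuous_pi fun _ => continuous_pi fun _ => continuous_pi fun _ => continuous_apply _

end DLN

open DLN in
/-- For a deep linear network with i.i.d. symmetric weights and two fixed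
inputs `x_u, x_v`, the gradient `g^u` of the output at input `x_u` and the Hessian `Ĥ^v` of the
output at input `x_v` satisfy `E[(g^u)ᵀ Ĥ^v g^u] = 0`. -/
theorem statement14
    (n : ℕ → ℕ) (L : ℕ) (hNL : n L = 1) (xu xv : Fin (n 0) → ℝ)
    (Ω : Type) [MeasurableSpace Ω] (μ : Measure Ω)
    (W : Ω → DLN.Params n L)
    (hmeas : ∀ p : DLN.Idx n L, Measurable fun ω => DLN.entry n L (W ω) p)
    (ν : Measure ℝ) [IsProbabilityMeasure ν]
    (hsym : Measure.map (fun t : ℝ => -t) ν = ν)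
    (hindep : iIndepFun (fun p ω => DLN.entry n L (W ω) p) μ)
    (hlaw : ∀ p : DLN.Idx n L, Measure.map (fun ω => DLN.entry n L (W ω) p) μ = ν) :
    ∫ ω, DLN.hess n L (DLN.F n L (by omega) xv) (W ω)
        (DLN.grad n L (DLN.F n L (by omega) xu) (W ω))
        (DLN.grad n L (DLN.F n L (by omega) xu) (W ω)) ∂μ = 0 := by
  have hnL : 0 < n L := by omega
  obtain rfl | hL := Nat.eq_zero_or_pos L
  · simp only [show ∀ x, F n 0 hnL x = fun _ => x ⟨0, hnL⟩ from fun _ => rfl, hess_const,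
      integral_zero]
  let Φ : Params n L → ℝ := fun V =>
    hess n L (F n L hnL xv) V (grad n L (F n L hnL xu) V) (grad n L (F n L hnL xu) V)
  show ∫ ω, Φ (W ω) ∂μ = 0
  have hΦ : Continuous Φ := continuous_hess_grad (contDiff_F hnL xv) (contDiff_F hnL xu)
  have hΦodd : ∀ V, Φ (flipFirstLayer n L V) = -Φ V :=
    hess_grad_flipFirstLayer (contDiff_F hnL xv) ((contDiff_F hnL xu).differentiable one_ne_zero)
      (F_flipFirstLayer hL hnL xv) (F_flipFirstLayer hL hnL xu)
  have hjoint : μ.map (fun ω p => entry n L (W ω) p) = Measure.pi fun _ => ν := by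
    rw [hindep.map_fun_eq_pi_map fun p => (hmeas p).aemeasurable]
    simp only [hlaw]
  calc ∫ ω, Φ (W ω) ∂μ = ∫ y, Φ (ofIdx y) ∂(Measure.pi fun _ => ν) := by
        rw [← hjoint]
        exact (integral_map (measurable_pi_lambda _ hmeas).aemeasurable
          (hΦ.comp continuous_ofIdx).aestronglyMeasurable).symm
    _ = 0 := by
        have hflip := measurePreserving_pi_mul_sign hsym (fun p : Idx n L => layerSign p.1)
          fun p => layerSign_eq_one_or_neg_one p.1
        exact hflip.integral_eq_zero_of_comp_eq_neg
          (hΦ.comp continuous_ofIdx).aestronglyMeasurable fun y => hΦodd (ofIdx y)
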